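/- Let k be a field of characteristic p > 0 and A₁(k) the first Weyl algebra with center Z = k[x^p, ∂^p]. The mod-p-reduction Poisson bracket on Z (induced from lifting to the Weyl algebra over a flat Z-algebra, or equivalently defined by {a,b} = (1/p)[ã, b̃] computed in the Weyl algebra over Z/p²-coefficients) satisfies {∂^p, x^p} = 1 (up to sign), so that Z with this bracket is isomorphic as a Poisson algebra to the polynomial ring k[X, Y] with the standard symplectic bracket {Y, X} = 1 (up to sign, where the induced bracket is the negative of the standard one). -/

import Mathlib

/-- The defining relation of the first Weyl algebra: `∂ * x = x * ∂ + 1`,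
where `x = ι false` and `∂ = ι true`. -/
inductive WeylRel (k : Type) [CommRing k] : FreeAlgebra k Bool → FreeAlgebra k Bool → Prop
  | rel : WeylRel k (FreeAlgebra.ι k true * FreeAlgebra.ι k false)
      (FreeAlgebra.ι k false * FreeAlgebra.ι k true + 1)

/-- The first Weyl algebra `A₁(k) = k⟨x, ∂⟩/(∂x - x∂ - 1)`. -/
abbrev Weyl (k : Type) [CommRing k] := RingQuot (WeylRel k)

/-- The generator `x` of the first Weyl algebra. -/
noncomputable def Weyl.x (k : Type) [CommRing k] : Weyl k :=
  RingQuot.mkRingHom (WeylRel k) (FreeAlgebra.ι k false)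

/-- The generator `∂` of the first Weyl algebra. -/
noncomputable def Weyl.d (k : Type) [CommRing k] : Weyl k :=
  RingQuot.mkRingHom (WeylRel k) (FreeAlgebra.ι k true)

/-!
`A₁(k)` acts on `k[X₀, X₁]` by `x ↦ X₀ ·` and `∂ ↦ X₁ · + ∂/∂X₀`; the extra commuting variable
`X₁` records the powers of `∂`, so `a ↦ a • 1` sends the normal-ordered monomial `x^i ∂^j` to
`X₀^i X₁^j`. As these monomials span `A₁(k)`, this symbol map is a linear isomorphism onto
`k[X₀, X₁]`, and it turns `[·, x]` and `[∂, ·]` into `∂/∂X₁` and `∂/∂X₀`. Hence in characteristic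
`p` an element is central iff its symbol has vanishing partial derivatives, i.e. lies in
`k[X₀^p, X₁^p]`, which is the image of `x^p, ∂^p`.

Over `ℤ` the symbol of `∂^p x^p` is `∑ₘ C(p,m)² (p-m)! X₀^m X₁^m`. The term `m = p` is the symbol
of `x^p ∂^p`, the terms `0 < m < p` are divisible by `p²`, and `p! ≡ -p (mod p²)` by Wilson's
theorem, so `[∂^p, x^p] + p ∈ p² A₁(ℤ)`. The quotient by `p` is unique since `A₁(ℤ) ≅ ℤ[X₀, X₁]`
is torsion-free.
-/

noncomputable section

open MvPolynomial
open scoped Nat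

theorem mul_pow_sub_pow_mul_of_mul_sub_mul_eq_one {R : Type*} [Ring R] {a b : R}
    (h : a * b - b * a = 1) (n : ℕ) : a * b ^ n - b ^ n * a = n * b ^ (n - 1) := by
  induction n with
  | zero => simp
  | succ n ih =>
    calc a * b ^ (n + 1) - b ^ (n + 1) * a
        = (a * b ^ n - b ^ n * a) * b + b ^ n * (a * b - b * a) := by noncomm_ring
      _ = (n + 1 : ℕ) * b ^ n := by
        rcases n with _ | n
        · simp [h]
        · rw [ih, h, mul_assoc, ← pow_succ, mul_one]
          push_cast
          simp only [add_mul, one_mul]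

theorem pow_mul_sub_mul_pow_of_mul_sub_mul_eq_one {R : Type*} [Ring R] {a b : R}
    (h : a * b - b * a = 1) (n : ℕ) : a ^ n * b - b * a ^ n = n * a ^ (n - 1) := by
  have h' : -b * a - a * -b = 1 := by rw [neg_mul, mul_neg, sub_neg_eq_add, neg_add_eq_sub, h]
  rw [← mul_pow_sub_pow_mul_of_mul_sub_mul_eq_one h' n, neg_mul, mul_neg, sub_neg_eq_add,
    neg_add_eq_sub]

theorem MvPolynomial.iterate_pderiv_X_pow {σ R : Type*} [CommRing R] (i : σ) (n j : ℕ) :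
    (pderiv i)^[j] (X i ^ n : MvPolynomial σ R) = n.descFactorial j • X i ^ (n - j) := by
  induction j with
  | zero => simp
  | succ j ih =>
    rw [Function.iterate_succ_apply', ih, map_nsmul, pderiv_pow, pderiv_X_self, mul_one,
      ← nsmul_eq_mul, smul_smul, Nat.descFactorial_succ, Nat.sub_sub, mul_comm]

theorem MvPolynomial.monomial_eq_fin_two {R : Type*} [CommRing R] (m : Fin 2 →₀ ℕ) (c : R) :
    monomial m c = C c * (X 0 ^ m 0 * X 1 ^ m 1) := by
  rw [monomial_eq, Finsupp.prod_fintype _ _ (fun _ => pow_zero _), Fin.prod_univ_two]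

theorem MvPolynomial.coeff_X_mul_pderiv {σ R : Type*} [CommRing R] (i : σ)
    (f : MvPolynomial σ R) (m : σ →₀ ℕ) : coeff m (X i * pderiv i f) = m i * coeff m f := by
  induction f using MvPolynomial.induction_on' with
  | monomial n r =>
    classical
    rw [X_mul_pderiv_monomial, coeff_smul, coeff_monomial]
    split_ifs with hnm
    · rw [hnm, nsmul_eq_mul]
    · rw [smul_zero, mul_zero]
  | add f g hf hg => rw [map_add, mul_add, coeff_add, hf, hg, coeff_add, mul_add]

theorem MvPolynomial.exists_expand_eq_of_forall_dvd {σ R : Type*} [CommRing R] {p : ℕ}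
    {f : MvPolynomial σ R} (h : ∀ m ∈ f.support, ∀ i, p ∣ m i) : ∃ g, expand p g = f := by
  refine ⟨∑ m ∈ f.support, monomial (m.mapRange (· / p) (Nat.zero_div p)) (coeff m f), ?_⟩
  rw [map_sum]
  conv_rhs => rw [f.as_sum]
  refine Finset.sum_congr rfl fun m hm => ?_
  have hpm : p • m.mapRange (· / p) (Nat.zero_div p) = m :=
    Finsupp.ext fun i => by simp [Nat.mul_div_cancel' (h m hm i)]
  rw [expand_monomial, hpm]

theorem MvPolynomial.exists_expand_eq_of_pderiv_eq_zero {σ R : Type*} [CommRing R] [IsDomain R]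
    (p : ℕ) [CharP R p] {f : MvPolynomial σ R} (h : ∀ i, pderiv i f = 0) :
    ∃ g, expand p g = f := by
  refine exists_expand_eq_of_forall_dvd fun m hm i => ?_
  have hmi : (m i : R) * coeff m f = 0 := by rw [← coeff_X_mul_pderiv, h i, mul_zero, coeff_zero]
  exact (CharP.cast_eq_zero_iff R p _).mp
    ((mul_eq_zero.mp hmi).resolve_right (mem_support_iff.mp hm))

theorem Submodule.eq_top_of_mul_mem_of_adjoin_eq_top {R A : Type*} [CommSemiring R] [Semiring A]
    [Algebra R A] {s : Set A} (hs : Algebra.adjoin R s = ⊤) {S : Submodule R A} (h1 : 1 ∈ S)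
    (hmul : ∀ a ∈ s, ∀ t ∈ S, a * t ∈ S) : S = ⊤ := by
  suffices ∀ a ∈ Algebra.adjoin R s, ∀ t ∈ S, a * t ∈ S from
    eq_top_iff'.mpr fun a => by simpa using this a (hs ▸ Algebra.mem_top) 1 h1
  intro a ha
  induction ha using Algebra.adjoin_induction with
  | mem a ha => exact hmul a ha
  | algebraMap r => exact fun t ht => (Algebra.smul_def r t) ▸ S.smul_mem r ht
  | add a b _ _ ha hb => exact fun t ht => (add_mul a b t) ▸ S.add_mem (ha t ht) (hb t ht)
  | mul a b _ _ ha hb => exact fun t ht => (mul_assoc a b t) ▸ ha _ (hb t ht)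

theorem Nat.Prime.sq_dvd_factorial_add_self {p : ℕ} (hp : p.Prime) : p ^ 2 ∣ p ! + p := by
  have hwilson : p ∣ (p - 1)! + 1 := by
    rw [← ZMod.natCast_eq_zero_iff]
    have := Fact.mk hp
    push_cast
    rw [ZMod.wilsons_lemma, neg_add_cancel]
  rw [← Nat.mul_factorial_pred hp.ne_zero, sq, ← mul_add_one]
  exact mul_dvd_mul_left p hwilson

namespace Weyl

variable (k : Type) [CommRing k]

theorem d_mul_x_sub_x_mul_d : d k * x k - x k * d k = 1 := by
  have h := RingQuot.mkRingHom_rel (WeylRel.rel (k := k))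
  simp only [map_mul, map_add, map_one] at h
  rw [x, d, h, add_sub_cancel_left]

theorem d_mul_x_pow_sub (n : ℕ) : d k * x k ^ n - x k ^ n * d k = n * x k ^ (n - 1) :=
  mul_pow_sub_pow_mul_of_mul_sub_mul_eq_one (d_mul_x_sub_x_mul_d k) n

theorem d_pow_mul_x_sub (n : ℕ) : d k ^ n * x k - x k * d k ^ n = n * d k ^ (n - 1) :=
  pow_mul_sub_mul_pow_of_mul_sub_mul_eq_one (d_mul_x_sub_x_mul_d k) n

theorem adjoin_x_d : Algebra.adjoin k {x k, d k} = ⊤ := by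
  have hrange : Set.range (RingQuot.mkAlgHom k (WeylRel k) ∘ FreeAlgebra.ι k) = {x k, d k} := by
    rw [Bool.range_eq]
    simp only [Function.comp_apply, x, d, ← RingQuot.mkAlgHom_coe k (WeylRel k)]
    rfl
  rw [← hrange, Set.range_comp, ← AlgHom.map_adjoin, FreeAlgebra.adjoin_range_ι, Algebra.map_top,
    AlgHom.range_eq_top]
  exact RingQuot.mkAlgHom_surjective k (WeylRel k)

theorem mem_center_iff {a : Weyl k} :
    a ∈ Subalgebra.center k (Weyl k) ↔ Commute a (x k) ∧ Commute a (d k) := by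
  refine ⟨fun ha => ⟨?_, ?_⟩, fun ⟨hx, hd⟩ => Subalgebra.mem_center_iff.mpr fun b => ?_⟩
  · exact (Subalgebra.mem_center_iff.mp ha (x k)).symm
  · exact (Subalgebra.mem_center_iff.mp ha (d k)).symm
  · have hb : b ∈ Algebra.adjoin k {x k, d k} := adjoin_x_d k ▸ Algebra.mem_top
    refine (Algebra.commute_of_mem_adjoin_of_forall_mem_commute hb ?_).eq.symm
    rintro c (rfl | rfl) <;> assumption

def polyRep : Weyl k →ₐ[k] Module.End k (MvPolynomial (Fin 2) k) :=
  RingQuot.liftAlgHom k ⟨FreeAlgebra.lift k fun b => cond b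
      (LinearMap.mulLeft k (X 1) + (pderiv 0).toLinearMap) (LinearMap.mulLeft k (X 0)), by
    rintro _ _ ⟨⟩
    refine LinearMap.ext fun f => ?_
    simp only [map_mul, map_add, map_one, FreeAlgebra.lift_ι_apply, cond, Module.End.mul_apply,
      LinearMap.add_apply, LinearMap.mulLeft_apply, Derivation.coeFn_coe, Module.End.one_apply,
      Derivation.leibniz, pderiv_X_self, smul_eq_mul]
    ring⟩

theorem polyRep_x : polyRep k (x k) = LinearMap.mulLeft k (X 0) := by
  rw [x, ← RingQuot.mkAlgHom_coe k, polyRep]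
  exact (RingQuot.liftAlgHom_mkAlgHom_apply ..).trans (FreeAlgebra.lift_ι_apply ..)

theorem polyRep_d : polyRep k (d k) = LinearMap.mulLeft k (X 1) + (pderiv 0).toLinearMap := by
  rw [d, ← RingQuot.mkAlgHom_coe k, polyRep]
  exact (RingQuot.liftAlgHom_mkAlgHom_apply ..).trans (FreeAlgebra.lift_ι_apply ..)

def symbol : Weyl k →ₗ[k] MvPolynomial (Fin 2) k :=
  LinearMap.applyₗ 1 ∘ₗ (polyRep k).toLinearMap

theorem symbol_mul (a b : Weyl k) : symbol k (a * b) = polyRep k a (symbol k b) := by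
  simp [symbol]

theorem symbol_one : symbol k 1 = 1 := by
  simp [symbol]

theorem symbol_natCast (n : ℕ) : symbol k n = n := by
  rw [← nsmul_one, map_nsmul, symbol_one, nsmul_one]

theorem symbol_d_pow (j : ℕ) : symbol k (d k ^ j) = X 1 ^ j := by
  induction j with
  | zero => rw [pow_zero, pow_zero, symbol_one]
  | succ j ih =>
    rw [pow_succ', symbol_mul, ih, polyRep_d]
    simp [pow_succ']

theorem symbol_x_pow_mul_d_pow (i j : ℕ) :
    symbol k (x k ^ i * d k ^ j) = X 0 ^ i * X 1 ^ j := by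
  rw [symbol_mul, map_pow, polyRep_x, LinearMap.pow_mulLeft, LinearMap.mulLeft_apply,
    symbol_d_pow]

theorem symbol_x_pow (n : ℕ) : symbol k (x k ^ n) = X 0 ^ n := by
  simpa using symbol_x_pow_mul_d_pow k n 0

theorem span_x_pow_mul_d_pow :
    Submodule.span k (Set.range fun m : ℕ × ℕ => x k ^ m.1 * d k ^ m.2) = ⊤ := by
  set S := Submodule.span k (Set.range fun m : ℕ × ℕ => x k ^ m.1 * d k ^ m.2)
  have mem : ∀ i j, x k ^ i * d k ^ j ∈ S := fun i j => Submodule.subset_span ⟨(i, j), rfl⟩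
  refine Submodule.eq_top_of_mul_mem_of_adjoin_eq_top (adjoin_x_d k) (by simpa using mem 0 0) ?_
  intro a ha t ht
  suffices S ≤ S.comap (LinearMap.mulLeft k a) from this ht
  rw [Submodule.span_le]
  rintro _ ⟨⟨i, j⟩, rfl⟩
  rcases ha with rfl | rfl
  · change x k * (x k ^ i * d k ^ j) ∈ S
    rw [← mul_assoc, ← pow_succ']
    exact mem _ _
  · have hdx : d k * x k ^ i = x k ^ i * d k + i * x k ^ (i - 1) :=
      eq_add_of_sub_eq' (d_mul_x_pow_sub k i)
    change d k * (x k ^ i * d k ^ j) ∈ S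
    rw [← mul_assoc, hdx, add_mul, mul_assoc, ← pow_succ', mul_assoc, ← nsmul_eq_mul]
    exact S.add_mem (mem _ _) (S.smul_of_tower_mem i (mem _ _))

def ofSymbol : MvPolynomial (Fin 2) k →ₗ[k] Weyl k :=
  (basisMonomials (Fin 2) k).constr k fun m => x k ^ m 0 * d k ^ m 1

theorem ofSymbol_monomial (m : Fin 2 →₀ ℕ) (c : k) :
    ofSymbol k (monomial m c) = c • (x k ^ m 0 * d k ^ m 1) := by
  have : monomial m c = c • basisMonomials (Fin 2) k m := by
    rw [coe_basisMonomials, smul_monomial, smul_eq_mul, mul_one]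
  rw [this, map_smul, ofSymbol, Module.Basis.constr_basis]

theorem ofSymbol_X_pow_mul_X_pow (i j : ℕ) :
    ofSymbol k (X 0 ^ i * X 1 ^ j) = x k ^ i * d k ^ j := by
  rw [X_pow_eq_monomial, X_pow_eq_monomial, monomial_mul, ofSymbol_monomial]
  simp

theorem symbol_ofSymbol (f : MvPolynomial (Fin 2) k) : symbol k (ofSymbol k f) = f := by
  suffices symbol k ∘ₗ ofSymbol k = LinearMap.id from LinearMap.congr_fun this f
  refine (basisMonomials (Fin 2) k).ext fun m => ?_
  change symbol k (ofSymbol k (monomial m 1)) = monomial m 1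
  rw [ofSymbol_monomial, one_smul, symbol_x_pow_mul_d_pow, monomial_eq_fin_two, C_1, one_mul]

theorem ofSymbol_symbol (a : Weyl k) : ofSymbol k (symbol k a) = a := by
  suffices ofSymbol k ∘ₗ symbol k = LinearMap.id from LinearMap.congr_fun this a
  refine LinearMap.ext_on (span_x_pow_mul_d_pow k) ?_
  rintro _ ⟨⟨i, j⟩, rfl⟩
  rw [LinearMap.comp_apply, symbol_x_pow_mul_d_pow, ofSymbol_X_pow_mul_X_pow, LinearMap.id_apply]

theorem symbol_injective : Function.Injective (symbol k) :=
  Function.LeftInverse.injective (ofSymbol_symbol k)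

theorem symbol_mul_x_sub_x_mul (a : Weyl k) :
    symbol k (a * x k - x k * a) = pderiv 1 (symbol k a) := by
  suffices symbol k ∘ₗ (LinearMap.mulRight k (x k) - LinearMap.mulLeft k (x k)) =
      (pderiv 1).toLinearMap ∘ₗ symbol k from LinearMap.congr_fun this a
  refine LinearMap.ext_on (span_x_pow_mul_d_pow k) ?_
  rintro _ ⟨⟨i, j⟩, rfl⟩
  have hcomm : x k ^ i * d k ^ j * x k - x k * (x k ^ i * d k ^ j) =
      j • (x k ^ i * d k ^ (j - 1)) := by
    rw [← mul_assoc, ← pow_succ', pow_succ, mul_assoc, mul_assoc, ← mul_sub, d_pow_mul_x_sub,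
      ← nsmul_eq_mul, mul_smul_comm]
  simp only [LinearMap.comp_apply, LinearMap.sub_apply, LinearMap.mulRight_apply,
    LinearMap.mulLeft_apply, hcomm, map_nsmul, symbol_x_pow_mul_d_pow, Derivation.coeFn_coe,
    pderiv_mul, pderiv_pow, pderiv_X_self, pderiv_X_of_ne (show (0 : Fin 2) ≠ 1 by decide)]
  simp only [mul_zero, zero_mul, mul_one, nsmul_eq_mul]
  ring

theorem symbol_d_mul_sub_mul_d (a : Weyl k) :
    symbol k (d k * a - a * d k) = pderiv 0 (symbol k a) := by
  suffices symbol k ∘ₗ (LinearMap.mulLeft k (d k) - LinearMap.mulRight k (d k)) =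
      (pderiv 0).toLinearMap ∘ₗ symbol k from LinearMap.congr_fun this a
  refine LinearMap.ext_on (span_x_pow_mul_d_pow k) ?_
  rintro _ ⟨⟨i, j⟩, rfl⟩
  have hcomm : d k * (x k ^ i * d k ^ j) - x k ^ i * d k ^ j * d k =
      i • (x k ^ (i - 1) * d k ^ j) := by
    rw [mul_assoc, ← pow_succ, pow_succ', ← mul_assoc, ← mul_assoc, ← sub_mul, d_mul_x_pow_sub,
      ← nsmul_eq_mul, smul_mul_assoc]
  simp only [LinearMap.comp_apply, LinearMap.sub_apply, LinearMap.mulRight_apply,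
    LinearMap.mulLeft_apply, hcomm, map_nsmul, symbol_x_pow_mul_d_pow, Derivation.coeFn_coe,
    pderiv_mul, pderiv_pow, pderiv_X_self, pderiv_X_of_ne (show (1 : Fin 2) ≠ 0 by decide)]
  simp only [mul_zero, add_zero, mul_one, nsmul_eq_mul]
  ring

theorem mem_center_iff_pderiv_symbol {a : Weyl k} :
    a ∈ Subalgebra.center k (Weyl k) ↔
      pderiv 0 (symbol k a) = 0 ∧ pderiv 1 (symbol k a) = 0 := by
  rw [mem_center_iff, ← symbol_d_mul_sub_mul_d, ← symbol_mul_x_sub_x_mul,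
    (symbol k).map_eq_zero_iff (symbol_injective k),
    (symbol k).map_eq_zero_iff (symbol_injective k),
    sub_eq_zero, sub_eq_zero, and_comm, commute_iff_eq, commute_iff_eq, eq_comm (a := d k * a)]

theorem symbol_d_pow_mul_x_pow (n : ℕ) :
    symbol k (d k ^ n * x k ^ n) =
      ∑ m ∈ Finset.range (n + 1), (n.choose m ^ 2 * (n - m)!) • (X 0 ^ m * X 1 ^ m) := by
  have hcomm : Commute (LinearMap.mulLeft k (X 1)) ((pderiv 0).toLinearMap :
      Module.End k (MvPolynomial (Fin 2) k)) := by
    refine LinearMap.ext fun f => ?_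
    simp
  rw [symbol_mul, map_pow, polyRep_d, hcomm.add_pow, LinearMap.sum_apply, symbol_x_pow]
  refine Finset.sum_congr rfl fun m hm => ?_
  have hmn : m ≤ n := Nat.lt_succ_iff.mp (Finset.mem_range.mp hm)
  rw [Module.End.mul_apply, Module.End.mul_apply, Module.End.natCast_apply, map_nsmul,
    LinearMap.pow_mulLeft, LinearMap.mulLeft_apply, Module.End.pow_apply, Derivation.coeFn_coe,
    iterate_pderiv_X_pow, Nat.sub_sub_self hmn, mul_smul_comm, mul_smul_comm, smul_smul,
    mul_comm (X 1 ^ m), Nat.descFactorial_eq_factorial_mul_choose, Nat.choose_symm hmn]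
  congr 1
  ring

theorem exists_d_pow_mul_x_pow_sub_add_eq_sq_mul {p : ℕ} (hp : p.Prime) :
    ∃ y : Weyl ℤ, d ℤ ^ p * x ℤ ^ p - x ℤ ^ p * d ℤ ^ p + p = (p : Weyl ℤ) ^ 2 * y := by
  obtain ⟨g, hg⟩ : (p : MvPolynomial (Fin 2) ℤ) ^ 2 ∣
      symbol ℤ (d ℤ ^ p * x ℤ ^ p - x ℤ ^ p * d ℤ ^ p + p) := by
    obtain ⟨q, rfl⟩ : ∃ q, p = q + 1 := ⟨p - 1, (Nat.sub_add_cancel hp.one_le).symm⟩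
    rw [map_add, map_sub, symbol_d_pow_mul_x_pow, symbol_x_pow_mul_d_pow, symbol_natCast,
      Finset.sum_range_succ, Finset.sum_range_succ']
    simp only [Nat.reduceSubDiff, nsmul_eq_mul, Nat.cast_mul, Nat.cast_pow, Nat.choose_zero_right,
      one_pow, tsub_zero, one_mul, pow_zero, mul_one, Nat.choose_self, tsub_self,
      Nat.factorial_zero, one_smul, add_sub_cancel_right]
    rw [add_assoc]
    refine dvd_add (Finset.dvd_sum fun m hm => ?_) ?_
    · have := hp.dvd_choose_self m.succ_ne_zero (by simpa using hm)
      exact ((pow_dvd_pow_of_dvd (Nat.cast_dvd_cast this) 2).mul_right _).mul_right _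
    · exact_mod_cast Nat.cast_dvd_cast (Nat.Prime.sq_dvd_factorial_add_self hp)
  refine ⟨ofSymbol ℤ g, symbol_injective ℤ ?_⟩
  rw [hg]
  simp only [← Nat.cast_pow, ← nsmul_eq_mul, map_nsmul, symbol_ofSymbol]

theorem natCast_mul_right_injective [IsDomain k] [CharZero k] {n : ℕ} (hn : n ≠ 0) :
    Function.Injective ((n : Weyl k) * ·) := by
  intro u v huv
  apply symbol_injective k
  have hsymb : ∀ a : Weyl k, symbol k (n * a) = n * symbol k a := fun a => by
    rw [← nsmul_eq_mul, map_nsmul, nsmul_eq_mul]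
  have := congrArg (symbol k) huv
  rw [hsymb, hsymb] at this
  exact mul_left_cancel₀ (Nat.cast_ne_zero.mpr hn) this

section CharP

variable (p : ℕ) [CharP k p]

theorem x_pow_mem_center : x k ^ p ∈ Subalgebra.center k (Weyl k) := by
  rw [mem_center_iff_pderiv_symbol, symbol_x_pow]
  simp

theorem d_pow_mem_center : d k ^ p ∈ Subalgebra.center k (Weyl k) := by
  rw [mem_center_iff_pderiv_symbol, symbol_d_pow]
  simp

def centerHom : MvPolynomial (Fin 2) k →ₐ[k] Subalgebra.center k (Weyl k) :=
  aeval ![⟨x k ^ p, x_pow_mem_center k p⟩, ⟨d k ^ p, d_pow_mem_center k p⟩]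

theorem centerHom_X_zero : (centerHom k p (X 0) : Weyl k) = x k ^ p := by
  simp [centerHom]

theorem centerHom_X_one : (centerHom k p (X 1) : Weyl k) = d k ^ p := by
  simp [centerHom]

theorem symbol_centerHom (f : MvPolynomial (Fin 2) k) :
    symbol k (centerHom k p f) = expand p f := by
  induction f using MvPolynomial.induction_on' with
  | monomial m c =>
    have hcoe : (centerHom k p (monomial m c) : Weyl k) =
        c • (x k ^ (p * m 0) * d k ^ (p * m 1)) := by
      rw [monomial_eq_fin_two, map_mul, map_mul, map_pow, map_pow, Subalgebra.coe_mul,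
        Subalgebra.coe_mul, Subalgebra.coe_pow, Subalgebra.coe_pow, centerHom_X_zero,
        centerHom_X_one, centerHom, aeval_C, Subalgebra.coe_algebraMap, ← Algebra.smul_def,
        pow_mul, pow_mul]
    rw [hcoe, map_smul, symbol_x_pow_mul_d_pow, monomial_eq_fin_two, map_mul, expand_C,
      smul_eq_C_mul]
    simp [pow_mul]
  | add f g hf hg => rw [map_add, Subalgebra.coe_add, map_add, hf, hg, map_add]

theorem centerHom_bijective [IsDomain k] (hp : p ≠ 0) : Function.Bijective (centerHom k p) := by
  refine ⟨fun f g hfg => expand_injective (Nat.pos_of_ne_zero hp) ?_, fun ⟨a, ha⟩ => ?_⟩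
  · rw [← symbol_centerHom, ← symbol_centerHom, hfg]
  · obtain ⟨h0, h1⟩ := (mem_center_iff_pderiv_symbol k).mp ha
    obtain ⟨g, hg⟩ := exists_expand_eq_of_pderiv_eq_zero p (Fin.forall_fin_two.mpr ⟨h0, h1⟩)
    exact ⟨g, Subtype.ext (symbol_injective k (by rw [symbol_centerHom, hg]))⟩

end CharP

end Weyl

end

/-- Let `W` be the Weyl algebra over `ℤ`, a flat `ℤ`-algebra with
`W/pW = A₁(𝔽_p)`, whose center is `𝔽_p[x^p, ∂^p]`, carrying the mod-`p`-reduction Poisson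
bracket `{a,b} = (1/p)[z,w] mod p` for lifts `z, w ∈ W`.  Then `{∂^p, x^p} = -1`:
the commutator `[∂^p, x^p]` in `W` is `p·u` with `u ≡ -1 (mod p)`.  Hence the center,
with this bracket, is isomorphic as a Poisson algebra to the polynomial ring `k[X, Y]`
(the coordinate ring of the cotangent bundle, via `X ↦ x^p`, `Y ↦ ∂^p`) with the negative
of the standard symplectic bracket `{Y, X} = 1`. -/
theorem statement7 (p : ℕ) (hp : p.Prime) :
    (∃ u : Weyl ℤ,
      Weyl.d ℤ ^ p * Weyl.x ℤ ^ p - Weyl.x ℤ ^ p * Weyl.d ℤ ^ p = (p : Weyl ℤ) * u) ∧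
    (∀ u : Weyl ℤ,
      Weyl.d ℤ ^ p * Weyl.x ℤ ^ p - Weyl.x ℤ ^ p * Weyl.d ℤ ^ p = (p : Weyl ℤ) * u →
      ∃ y : Weyl ℤ, u - (-1) = (p : Weyl ℤ) * y) ∧
    ∃ e : MvPolynomial (Fin 2) (ZMod p) ≃ₐ[ZMod p]
        Subalgebra.center (ZMod p) (Weyl (ZMod p)),
      (e (MvPolynomial.X 0) : Weyl (ZMod p)) = Weyl.x (ZMod p) ^ p ∧
      (e (MvPolynomial.X 1) : Weyl (ZMod p)) = Weyl.d (ZMod p) ^ p := by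
  have := Fact.mk hp
  obtain ⟨y, hy⟩ := Weyl.exists_d_pow_mul_x_pow_sub_add_eq_sq_mul hp
  have hcomm : Weyl.d ℤ ^ p * Weyl.x ℤ ^ p - Weyl.x ℤ ^ p * Weyl.d ℤ ^ p =
      (p : Weyl ℤ) * (p * y - 1) := by
    rw [eq_sub_of_add_eq hy, mul_sub, mul_one, ← mul_assoc, sq]
  refine ⟨⟨_, hcomm⟩, fun u hu => ⟨y, ?_⟩,
    AlgEquiv.ofBijective _ (Weyl.centerHom_bijective _ p hp.ne_zero),
    Weyl.centerHom_X_zero _ p, Weyl.centerHom_X_one _ p⟩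
  rw [Weyl.natCast_mul_right_injective ℤ hp.ne_zero (hu.symm.trans hcomm), sub_neg_eq_add,
    sub_add_cancel]
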